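/- arXiv:math/0209187 — 5 statements merged into one kernel-verified Lean document; each statement's English description precedes it below -/
import Mathlib

section
/- If f : M → F is a map from a finitely generated module M over a commutative ring R to a free R-module F such that the dual map F* → M* is surjective, then f is versal, i.e., every R-module map from M to a free R-module factors through f. -/
/-!
A map to a product `ι → R` factors through `f` coordinatewise, since each coordinate functional
lifts along the surjection `f.dualMap`. Since `M` is finitely generated, the image of `g : M → G`
lies in the span of finitely many basis vectors of `G`, so `g` factors as `M → (s → R) → G` for a
finite set `s` of basis indices.
-/

open Submodule

theorem LinearMap.exists_comp_eq_of_dualMap_surjective {R M F ι : Type*} [CommSemiring R]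
    [AddCommMonoid M] [Module R M] [AddCommMonoid F] [Module R F] {f : M →ₗ[R] F}
    (hf : Function.Surjective f.dualMap) (g : M →ₗ[R] ι → R) :
    ∃ h : F →ₗ[R] ι → R, h ∘ₗ f = g := by
  choose φ hφ using fun i => hf (LinearMap.proj i ∘ₗ g)
  exact ⟨LinearMap.pi φ, by ext m i; exact congr($(hφ i) m)⟩

namespace Module.Basis

variable {ι R G : Type*} [Semiring R] [AddCommMonoid G] [Module R G] (b : Basis ι R G)

theorem exists_finset_le_span_image {N : Submodule R G} (hN : N.FG) :
    ∃ s : Finset ι, N ≤ span R (b '' s) := by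
  have hN_le : N ≤ ⨆ i, R ∙ b i := by rw [← span_range_eq_iSup, b.span_eq]; exact le_top
  obtain ⟨s, hs⟩ :=
    CompleteLattice.IsCompactElement.exists_finset_of_le_iSup _ ((fg_iff_compact N).1 hN) _ hN_le
  refine ⟨s, hs.trans_eq ?_⟩
  rw [Set.image_eq_iUnion, span_iUnion₂]
  rfl

theorem sum_repr_smul_of_mem_span_image {s : Finset ι} {x : G} (hx : x ∈ span R (b '' s)) :
    ∑ i ∈ s, b.repr x i • b i = x := by
  conv_rhs => rw [← b.linearCombination_repr x]
  exact (Finsupp.linearCombination_apply_of_mem_supported R (b.mem_span_image.1 hx)).symm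

end Module.Basis

theorem versal_of_dualMap_surjective_general {R : Type*} [CommRing R]
    {M : Type*} [AddCommGroup M] [Module R M] [Module.Finite R M]
    {F : Type*} [AddCommGroup F] [Module R F]
    (f : M →ₗ[R] F) (hdual : Function.Surjective f.dualMap) :
    ∀ (G : Type*) [AddCommGroup G] [Module R G] [Module.Free R G] (g : M →ₗ[R] G),
      ∃ h : F →ₗ[R] G, h ∘ₗ f = g := by
  intro G _ _ _ g
  let b := Module.Free.chooseBasis R G
  obtain ⟨s, hs⟩ := b.exists_finset_le_span_image (fg_range g)
  obtain ⟨h, hh⟩ := LinearMap.exists_comp_eq_of_dualMap_surjective hdual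
    (LinearMap.pi (fun i : s => b.coord i) ∘ₗ g)
  refine ⟨Fintype.linearCombination R (fun i : s => b i) ∘ₗ h, LinearMap.ext fun m => ?_⟩
  have hcoord : h (f m) = fun i : s => b.repr (g m) i := congr($hh m)
  simp only [LinearMap.comp_apply, hcoord, Fintype.linearCombination_apply]
  rw [Finset.sum_coe_sort s fun i => b.repr (g m) i • b i]
  exact b.sum_repr_smul_of_mem_span_image (hs ⟨m, rfl⟩)

/-- If `M` is finitely generated and the dual map of `f : M → F` (with `F` free) is
surjective, then `f` is versal: every map from `M` to a free module factors through `f`. -/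
theorem versal_of_dualMap_surjective {R : Type*} [CommRing R]
    {M : Type*} [AddCommGroup M] [Module R M] [Module.Finite R M]
    {F : Type*} [AddCommGroup F] [Module R F] [Module.Free R F]
    (f : M →ₗ[R] F) (hdual : Function.Surjective f.dualMap) :
    ∀ (G : Type*) [AddCommGroup G] [Module R G] [Module.Free R G] (g : M →ₗ[R] G),
      ∃ h : F →ₗ[R] G, h ∘ₗ f = g :=
  versal_of_dualMap_surjective_general f hdual
end

section
/- Let R be a commutative ring, F a free R-module with basis, M a submodule of F, and R̃ the R-subalgebra of Sym(F) generated by the degree-one elements coming from M. Let H be a direct summand of F with H ∩ M = 0. If d! is a nonzerodivisor in R, then (H · Sym(F)) ∩ R̃_d = 0, where R̃_d is the degree-d graded component of R̃ and H · Sym(F) is the ideal of Sym(F) generated by H. -/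
noncomputable section

open TensorAlgebra in
/-- The relation defining the symmetric algebra as a quotient of the tensor algebra. -/
inductive SymRel (R : Type*) [CommRing R] (M : Type*) [AddCommGroup M] [Module R M] :
    TensorAlgebra R M → TensorAlgebra R M → Prop
  | mul_comm (x y : M) : SymRel R M (ι R x * ι R y) (ι R y * ι R x)

/-- The symmetric algebra of a module. -/
abbrev SymmAlg (R : Type*) [CommRing R] (M : Type*) [AddCommGroup M] [Module R M] :=
  RingQuot (SymRel R M)

variable (R : Type*) [CommRing R] {M N : Type*} [AddCommGroup M] [Module R M]
  [AddCommGroup N] [Module R N]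

/-- The canonical inclusion of `M` in degree one of its symmetric algebra. -/
def SymmAlg.ι : M →ₗ[R] SymmAlg R M :=
  (RingQuot.mkAlgHom R (SymRel R M)).toLinearMap ∘ₗ TensorAlgebra.ι R

instance : CommRing (SymmAlg R M) :=
  { (inferInstance : Ring (SymmAlg R M)) with
    mul_comm := by
      have key : ∀ x y : TensorAlgebra R M,
          RingQuot.mkAlgHom R (SymRel R M) x * RingQuot.mkAlgHom R (SymRel R M) y =
          RingQuot.mkAlgHom R (SymRel R M) y * RingQuot.mkAlgHom R (SymRel R M) x := by
        intro x y
        induction x using TensorAlgebra.induction with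
        | algebraMap r => simp [Algebra.commutes]
        | ι m =>
          induction y using TensorAlgebra.induction with
          | algebraMap r => simp [Algebra.commutes]
          | ι m' =>
            have h := RingQuot.mkAlgHom_rel R (SymRel.mul_comm (R := R) m m')
            simpa only [map_mul] using h
          | add a b ha hb => simp only [map_add, add_mul, mul_add, ha, hb]
          | mul a b ha hb =>
            simp only [map_mul, ← mul_assoc, ha]
            rw [mul_assoc _ _ (RingQuot.mkAlgHom R (SymRel R M) b), hb, mul_assoc]
        | add a b ha hb => simp only [map_add, add_mul, mul_add, ha, hb]
        | mul a b ha hb =>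
          simp only [map_mul, mul_assoc, hb]
          rw [← mul_assoc, ha, mul_assoc]
      intro a b
      obtain ⟨x, rfl⟩ := RingQuot.mkAlgHom_surjective R (SymRel R M) a
      obtain ⟨y, rfl⟩ := RingQuot.mkAlgHom_surjective R (SymRel R M) b
      exact key x y }

theorem SymmAlg.ι_mul_comm (x y : M) :
    SymmAlg.ι R x * SymmAlg.ι R y = SymmAlg.ι R y * SymmAlg.ι R x := mul_comm _ _

/-- Functoriality of the symmetric algebra. -/
def SymmAlg.map (f : M →ₗ[R] N) : SymmAlg R M →ₐ[R] SymmAlg R N :=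
  RingQuot.liftAlgHom R ⟨TensorAlgebra.lift R ((SymmAlg.ι R).comp f), by
    intro x y h
    cases h with
    | mul_comm a b => simp [mul_comm]⟩

/-! ### Auxiliary development: the symmetric algebra as a polynomial ring -/

namespace SymPolyAux

open MvPolynomial

variable {R₀ : Type*} [CommRing R₀] {F₀ : Type*} [AddCommGroup F₀] [Module R₀ F₀]
  {B : Type*} (b : Module.Basis B R₀ F₀)

/-- The linear embedding of `F₀` into `MvPolynomial B R₀` sending `b i` to `X i`. -/
def eL : F₀ →ₗ[R₀] MvPolynomial B R₀ := Module.Basis.constr b ℕ X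

@[simp] lemma eL_basis (i : B) : eL b (b i) = X i := Module.Basis.constr_basis b ℕ X i

lemma eL_coeff (f : F₀) (i : B) :
    MvPolynomial.coeff (Finsupp.single i 1) (eL b f) = b.repr f i := by
  classical
  have h : (MvPolynomial.lcoeff (R := R₀) (σ := B) (Finsupp.single i 1)) ∘ₗ eL b
      = b.coord i := by
    refine b.ext fun j => ?_
    simp only [LinearMap.comp_apply, eL_basis, Module.Basis.coord_apply, Module.Basis.repr_self]
    rw [MvPolynomial.lcoeff_apply, MvPolynomial.X, MvPolynomial.coeff_monomial]
    by_cases hji : j = i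
    · subst hji; simp
    · rw [if_neg, Finsupp.single_apply, if_neg hji]
      intro hc
      exact hji (Finsupp.single_left_injective one_ne_zero hc)
  have := congrArg (fun g => g f) h
  simpa [MvPolynomial.lcoeff_apply] using this

lemma eL_injective : Function.Injective (eL b) := by
  intro f g hfg
  apply b.repr.injective
  ext i
  rw [← eL_coeff b f i, ← eL_coeff b g i, hfg]

/-- The contraction derivation attached to a functional `φ`. -/
def Dd (φ : F₀ →ₗ[R₀] R₀) : Derivation R₀ (MvPolynomial B R₀) (MvPolynomial B R₀) :=
  mkDerivation R₀ fun i => C (φ (b i))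

@[simp] lemma Dd_X (φ : F₀ →ₗ[R₀] R₀) (i : B) : Dd b φ (X i) = C (φ (b i)) :=
  mkDerivation_X _ _ _

@[simp] lemma Dd_eL (φ : F₀ →ₗ[R₀] R₀) (f : F₀) : Dd b φ (eL b f) = C (φ f) := by
  have h : (Dd b φ).toLinearMap ∘ₗ eL b = (Algebra.linearMap R₀ _) ∘ₗ φ :=
    b.ext fun i => by simp [Algebra.linearMap, algebraMap_eq]
  have := congrArg (fun g => g f) h
  simpa [Algebra.linearMap, algebraMap_eq] using this

lemma Dd_add (φ ψ : F₀ →ₗ[R₀] R₀) : Dd b (φ + ψ) = Dd b φ + Dd b ψ := by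
  apply derivation_ext; intro i; simp [Derivation.add_apply]

/-- The derivation attached to an endomorphism `τ`. -/
def Ed (τ : F₀ →ₗ[R₀] F₀) : Derivation R₀ (MvPolynomial B R₀) (MvPolynomial B R₀) :=
  mkDerivation R₀ fun i => eL b (τ (b i))

@[simp] lemma Ed_X (τ : F₀ →ₗ[R₀] F₀) (i : B) : Ed b τ (X i) = eL b (τ (b i)) :=
  mkDerivation_X _ _ _

@[simp] lemma Ed_eL (τ : F₀ →ₗ[R₀] F₀) (f : F₀) : Ed b τ (eL b f) = eL b (τ f) := by
  have h : (Ed b τ).toLinearMap ∘ₗ eL b = eL b ∘ₗ τ := b.ext fun i => by simp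
  exact congrArg (fun g => g f) h

/-- The algebra endomorphism attached to an endomorphism `τ`. -/
def Ph (τ : F₀ →ₗ[R₀] F₀) : MvPolynomial B R₀ →ₐ[R₀] MvPolynomial B R₀ :=
  aeval fun i => eL b (τ (b i))

@[simp] lemma Ph_X (τ : F₀ →ₗ[R₀] F₀) (i : B) : Ph b τ (X i) = eL b (τ (b i)) :=
  aeval_X _ _

@[simp] lemma Ph_C (τ : F₀ →ₗ[R₀] F₀) (r : R₀) : Ph b τ (C r) = C r := by
  simp [Ph, algebraMap_eq]

@[simp] lemma Ph_eL (τ : F₀ →ₗ[R₀] F₀) (f : F₀) : Ph b τ (eL b f) = eL b (τ f) := by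
  have h : (Ph b τ).toLinearMap ∘ₗ eL b = eL b ∘ₗ τ := b.ext fun i => by simp
  exact congrArg (fun g => g f) h

/-- Commutation of `Ph` with contraction. -/
lemma Ph_comm_Dd (τ : F₀ →ₗ[R₀] F₀) (φ : F₀ →ₗ[R₀] R₀) (hφτ : φ ∘ₗ τ = φ)
    (p : MvPolynomial B R₀) : Ph b τ (Dd b φ p) = Dd b φ (Ph b τ p) := by
  induction p using MvPolynomial.induction_on with
  | C a => simp
  | add p q hp hq => simp [map_add, hp, hq]
  | mul_X p i hp =>
      have hφ : φ (τ (b i)) = φ (b i) := congrArg (fun g => g (b i)) hφτ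
      simp only [Derivation.leibniz, smul_eq_mul, Derivation.map_add, map_add, map_mul,
        Dd_X, Ph_C, Ph_X, Dd_eL, hφ, hp]

/-- Commutation of `Ph` with `Ed` for commuting endomorphisms. -/
lemma Ph_comm_Ed (τ σ : F₀ →ₗ[R₀] F₀) (h : τ ∘ₗ σ = σ ∘ₗ τ)
    (p : MvPolynomial B R₀) : Ph b τ (Ed b σ p) = Ed b σ (Ph b τ p) := by
  induction p using MvPolynomial.induction_on with
  | C a => simp
  | add p q hp hq => simp [map_add, hp, hq]
  | mul_X p i hp =>
      have hc : τ (σ (b i)) = σ (τ (b i)) := congrArg (fun g => g (b i)) h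
      simp only [Derivation.leibniz, smul_eq_mul, Derivation.map_add, map_add, map_mul,
        Ed_X, Ph_X, Ph_eL, Ed_eL, hc, hp]

/-- Commutation of contraction with `Ed` when `φ ∘ σ = 0`. -/
lemma Dd_comm_Ed (φ : F₀ →ₗ[R₀] R₀) (σ : F₀ →ₗ[R₀] F₀) (h : φ ∘ₗ σ = 0)
    (p : MvPolynomial B R₀) : Dd b φ (Ed b σ p) = Ed b σ (Dd b φ p) := by
  induction p using MvPolynomial.induction_on with
  | C a => simp
  | add p q hp hq => simp [map_add, hp, hq]
  | mul_X p i hp =>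
      have hz : φ (σ (b i)) = 0 := congrArg (fun g => g (b i)) h
      simp only [Derivation.leibniz, smul_eq_mul, Derivation.map_add, Dd_X, Ed_X,
        Dd_eL, hz, map_zero, derivation_C, hp]
      ring

/-- A derivation sending a submodule `N` into the constants maps `N ^ (k+1)` into `N ^ k`. -/
lemma deriv_pow_mem (N : Submodule R₀ (MvPolynomial B R₀))
    (D : Derivation R₀ (MvPolynomial B R₀) (MvPolynomial B R₀))
    (hD : ∀ n ∈ N, ∃ r : R₀, D n = C r) :
    ∀ k : ℕ, ∀ x ∈ N ^ (k + 1), D x ∈ N ^ k := by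
  intro k
  induction k with
  | zero =>
      intro x hx
      rw [pow_one] at hx
      obtain ⟨r, hr⟩ := hD x hx
      rw [pow_zero, hr]
      exact Submodule.mem_one.2 ⟨r, (algebraMap_eq R₀ B ▸ rfl)⟩
  | succ k ih =>
      intro x hx
      rw [pow_succ] at hx
      refine Submodule.mul_induction_on hx ?_ ?_
      · intro a ha n hn
        rw [Derivation.leibniz, smul_eq_mul, smul_eq_mul]
        obtain ⟨r, hr⟩ := hD n hn
        apply Submodule.add_mem
        · rw [hr, mul_comm, C_mul']
          exact Submodule.smul_mem _ _ ha
        · rw [pow_succ']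
          exact Submodule.mul_mem_mul hn (ih a ha)
      · intro x y hx hy
        rw [map_add]
        exact Submodule.add_mem _ hx hy

/-- Euler's identity for a derivation fixing every element of `N`. -/
lemma deriv_pow_euler (N : Submodule R₀ (MvPolynomial B R₀))
    (D : Derivation R₀ (MvPolynomial B R₀) (MvPolynomial B R₀))
    (hD : ∀ n ∈ N, D n = n) :
    ∀ k : ℕ, ∀ x ∈ N ^ k, D x = k • x := by
  intro k
  induction k with
  | zero =>
      intro x hx
      rw [pow_zero] at hx
      obtain ⟨r, hr⟩ := Submodule.mem_one.1 hx
      rw [← hr, zero_smul, Derivation.map_algebraMap]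
  | succ k ih =>
      intro x hx
      rw [pow_succ] at hx
      refine Submodule.mul_induction_on hx ?_ ?_
      · intro a ha n hn
        simp only [Derivation.leibniz, smul_eq_mul, hD n hn, ih a ha, succ_nsmul,
          nsmul_eq_mul]
        ring
      · intro x y hx hy
        rw [map_add, hx, hy, smul_add]

lemma cast_mem_nonZeroDivisors_of_dvd {m n : ℕ} (h : m ∣ n)
    (hn : (n : R₀) ∈ nonZeroDivisors R₀) : (m : R₀) ∈ nonZeroDivisors R₀ := by
  obtain ⟨c, rfl⟩ := h
  rw [Nat.cast_mul] at hn
  exact (mul_mem_nonZeroDivisors.1 hn).1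

lemma eq_zero_of_cast_smul_eq_zero {n : ℕ} (hn : (n : R₀) ∈ nonZeroDivisors R₀)
    {p : MvPolynomial B R₀} (hp : n • p = 0) : p = 0 := by
  ext m
  have h1 : (n : R₀) * coeff m p = 0 := by
    have := congrArg (coeff m) hp
    rw [← Nat.cast_smul_eq_nsmul R₀ n p] at this
    simpa [coeff_smul] using this
  rw [mul_comm] at h1
  simpa using (mem_nonZeroDivisors_iff.1 hn).2 _ h1

lemma deriv_sum_apply {ι : Type*} (s : Finset ι)
    (D : ι → Derivation R₀ (MvPolynomial B R₀) (MvPolynomial B R₀)) (p : MvPolynomial B R₀) :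
    (∑ i ∈ s, D i) p = ∑ i ∈ s, D i p := by
  classical
  induction s using Finset.induction_on with
  | empty => simp [Derivation.zero_apply]
  | insert a s h ih => rw [Finset.sum_insert h, Finset.sum_insert h, Derivation.add_apply, ih]

/-- If all coordinate contractions of `τ` kill `x`, then the derivation `Ed τ` kills `x`. -/
lemma Ed_eq_zero_of_contractions (τ : F₀ →ₗ[R₀] F₀) (x : MvPolynomial B R₀)
    (hx : ∀ i : B, Dd b (b.coord i ∘ₗ τ) x = 0) : Ed b τ x = 0 := by
  classical
  set S : Finset B := x.vars.biUnion (fun j => (b.repr (τ (b j))).support) with hS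
  set D2 : Derivation R₀ (MvPolynomial B R₀) (MvPolynomial B R₀) :=
    ∑ i ∈ S, (X i : MvPolynomial B R₀) • Dd b (b.coord i ∘ₗ τ) with hD2
  have hagree : Ed b τ x = D2 x := by
    refine derivation_eq_of_forall_mem_vars fun j hj => ?_
    rw [Ed_X, hD2, deriv_sum_apply]
    have hsupp : (b.repr (τ (b j))).support ⊆ S :=
      hS ▸ Finset.subset_biUnion_of_mem (fun j => (b.repr (τ (b j))).support) hj
    rw [eL, Module.Basis.constr_apply,
      Finsupp.sum_of_support_subset _ hsupp _ (fun i _ => by simp)]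
    refine Finset.sum_congr rfl fun i _ => ?_
    rw [Derivation.smul_apply, Dd_X, smul_eq_mul, LinearMap.comp_apply,
      Module.Basis.coord_apply, mul_comm, C_mul']
  rw [hagree, hD2, deriv_sum_apply]
  refine Finset.sum_eq_zero fun i _ => ?_
  rw [Derivation.smul_apply, hx i, smul_zero]

/-- The main lemma, in the polynomial model. -/
lemma poly_main (K H H' : Submodule R₀ F₀) (hc : IsCompl H H')
    (hHK : H ⊓ K = ⊥) :
    ∀ d : ℕ, ((d.factorial : R₀) ∈ nonZeroDivisors R₀) →
      ∀ x ∈ (Submodule.map (eL b) K) ^ d,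
        Ph b (H'.subtype ∘ₗ H'.linearProjOfIsCompl H hc.symm) x = 0 → x = 0 := by
  set pi : F₀ →ₗ[R₀] F₀ := H'.subtype ∘ₗ H'.linearProjOfIsCompl H hc.symm with hpi
  set hp : F₀ →ₗ[R₀] F₀ := H.subtype ∘ₗ H.linearProjOfIsCompl H' hc with hhp
  have hadd : ∀ f : F₀, hp f + pi f = f := fun f =>
    Submodule.projection_add_projection_eq_self hc f
  have hpiH : ∀ f ∈ H, pi f = 0 := fun f hf => by
    rw [hpi, LinearMap.comp_apply]; exact (congrArg _ (Submodule.linearProjOfIsCompl_apply_right' hc.symm hf)).trans (map_zero _)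
  have hpiH' : ∀ f ∈ H', pi f = f := fun f hf => by
    have := Submodule.linearProjOfIsCompl_apply_left (p := H') (q := H) hc.symm ⟨f, hf⟩
    rw [hpi, LinearMap.comp_apply, Submodule.subtype_apply]; exact congrArg Subtype.val this
  have hpH : ∀ f ∈ H, hp f = f := fun f hf => by
    have := Submodule.linearProjOfIsCompl_apply_left (p := H) (q := H') hc ⟨f, hf⟩
    rw [hhp, LinearMap.comp_apply, Submodule.subtype_apply]; exact congrArg Subtype.val this
  have hpH' : ∀ f ∈ H', hp f = 0 := fun f hf => by
    rw [hhp, LinearMap.comp_apply]; exact (congrArg _ (Submodule.linearProjOfIsCompl_apply_right' hc hf)).trans (map_zero _)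
  have hpmem : ∀ f : F₀, hp f ∈ H := fun f => (H.linearProjOfIsCompl H' hc f).2
  have hpimem : ∀ f : F₀, pi f ∈ H' := fun f => (H'.linearProjOfIsCompl H hc.symm f).2
  have hppi : ∀ f : F₀, pi (pi f) = pi f := fun f => hpiH' _ (hpimem f)
  have hker : ∀ f : F₀, pi f = 0 → f ∈ H := fun f h0 => by
    have h1 := hadd f
    rw [h0, add_zero] at h1
    exact h1 ▸ hpmem f
  intro d
  induction d with
  | zero =>
      intro _ x hx hPhi
      rw [pow_zero] at hx
      obtain ⟨r, hr⟩ := Submodule.mem_one.1 hx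
      rw [← hr] at hPhi ⊢
      rwa [AlgHom.commutes] at hPhi
  | succ d ih =>
      intro hd x hx hPhi
      have hd' : ((d.factorial : R₀)) ∈ nonZeroDivisors R₀ :=
        cast_mem_nonZeroDivisors_of_dvd (Nat.factorial_dvd_factorial (Nat.le_succ d)) hd
      have step1 : ∀ φ : F₀ →ₗ[R₀] R₀, (∀ f ∈ H, φ f = 0) → Dd b φ x = 0 := by
        intro φ hφ
        have hmem : Dd b φ x ∈ (Submodule.map (eL b) K) ^ d := by
          refine deriv_pow_mem _ _ (fun n hn => ?_) d x hx
          obtain ⟨m, _, rfl⟩ := hn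
          exact ⟨φ m, Dd_eL b φ m⟩
        have hcomm : φ ∘ₗ pi = φ := by
          ext f
          have h1 : φ (hp f) = 0 := hφ _ (hpmem f)
          have h2 : φ (hp f) + φ (pi f) = φ f := by rw [← map_add, hadd f]
          simpa [h1] using h2
        have hPhiD : Ph b pi (Dd b φ x) = 0 := by
          rw [Ph_comm_Dd b pi φ hcomm, hPhi, map_zero]
        exact ih hd' _ hmem hPhiD
      have step2 : Ed b pi x = 0 := by
        refine Ed_eq_zero_of_contractions b pi x fun i => ?_
        refine step1 _ fun f hf => ?_
        simp [LinearMap.comp_apply, hpiH f hf]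
      by_cases hd0 : d = 0
      · subst hd0
        rw [pow_one] at hx
        obtain ⟨m, hm, rfl⟩ := hx
        rw [Ph_eL] at hPhi
        have hm0 : pi m = 0 := by
          apply eL_injective b
          rw [hPhi, map_zero]
        have hmem : m ∈ H ⊓ K := ⟨hker m hm0, hm⟩
        rw [hHK, Submodule.mem_bot] at hmem
        rw [hmem, map_zero]
      · have step3 : ∀ ψ : F₀ →ₗ[R₀] R₀, (∀ f ∈ H', ψ f = 0) → Dd b ψ x = 0 := by
          intro ψ hψ
          set u := Dd b ψ x with hu
          have hmem : u ∈ (Submodule.map (eL b) K) ^ d := by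
            refine deriv_pow_mem _ _ (fun n hn => ?_) d x hx
            obtain ⟨m, _, rfl⟩ := hn
            exact ⟨ψ m, Dd_eL b ψ m⟩
          have hcomm : ψ ∘ₗ pi = 0 := by
            ext f
            simp [LinearMap.comp_apply, hψ _ (hpimem f)]
          have hEu : Ed b pi u = 0 := by
            rw [hu, ← Dd_comm_Ed b ψ pi hcomm x, step2, map_zero]
          have hPhiu_mem : Ph b pi u ∈ (Submodule.map (eL b ∘ₗ pi) K) ^ d := by
            have h1 : Submodule.map (Ph b pi).toLinearMap ((Submodule.map (eL b) K) ^ d)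
                = (Submodule.map (Ph b pi).toLinearMap (Submodule.map (eL b) K)) ^ d :=
              Submodule.map_pow _ _ d
            have h2 : Submodule.map (Ph b pi).toLinearMap (Submodule.map (eL b) K)
                = Submodule.map (eL b ∘ₗ pi) K := by
              rw [← Submodule.map_comp]
              congr 1
              exact b.ext fun i => by simp
            rw [← h2, ← h1]
            exact Submodule.mem_map_of_mem hmem
          have hEuler : Ed b pi (Ph b pi u) = d • Ph b pi u := by
            refine deriv_pow_euler _ _ (fun n hn => ?_) d _ hPhiu_mem
            obtain ⟨m, _, rfl⟩ := hn
            rw [LinearMap.comp_apply, Ed_eL, hppi]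
          have hzero : d • Ph b pi u = 0 := by
            rw [← hEuler, ← Ph_comm_Ed b pi pi rfl u, hEu, map_zero]
          have hPhiu : Ph b pi u = 0 :=
            eq_zero_of_cast_smul_eq_zero (cast_mem_nonZeroDivisors_of_dvd
              (Nat.dvd_factorial (Nat.pos_of_ne_zero hd0) (Nat.le_succ d)) hd) hzero
          exact ih hd' u hmem hPhiu
        have step4 : ∀ χ : F₀ →ₗ[R₀] R₀, Dd b χ x = 0 := by
          intro χ
          have hdecomp : χ = (χ ∘ₗ hp) + (χ ∘ₗ pi) := by
            ext f
            simp only [LinearMap.add_apply, LinearMap.comp_apply]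
            rw [← map_add, hadd f]
          rw [hdecomp, Dd_add, Derivation.add_apply,
            step3 _ (fun f hf => by simp [LinearMap.comp_apply, hpH' f hf]),
            step1 _ (fun f hf => by simp [LinearMap.comp_apply, hpiH f hf]), add_zero]
        have step5 : Ed b LinearMap.id x = 0 :=
          Ed_eq_zero_of_contractions b LinearMap.id x fun i => step4 _
        have hEuler : Ed b LinearMap.id x = (d + 1) • x := by
          refine deriv_pow_euler _ _ (fun n hn => ?_) (d + 1) x hx
          obtain ⟨m, _, rfl⟩ := hn
          rw [Ed_eL, LinearMap.id_apply]
        have hzero : (d + 1) • x = 0 := by rw [← hEuler, step5]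
        exact eq_zero_of_cast_smul_eq_zero (cast_mem_nonZeroDivisors_of_dvd
          (Nat.dvd_factorial (Nat.succ_pos d) le_rfl) hd) hzero

end SymPolyAux

/-! ### Transport to the symmetric algebra -/

namespace SymPolyAux

open MvPolynomial

variable (R₀ : Type*) [CommRing R₀] {F₀ : Type*} [AddCommGroup F₀] [Module R₀ F₀]
  {B : Type*} (b : Module.Basis B R₀ F₀)

/-- The algebra map from the symmetric algebra to the polynomial ring. -/
def fwd : SymmAlg R₀ F₀ →ₐ[R₀] MvPolynomial B R₀ :=
  RingQuot.liftAlgHom R₀ ⟨TensorAlgebra.lift R₀ (eL b), by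
    intro x y h
    cases h with
    | mul_comm a c => simp [mul_comm]⟩

@[simp] lemma fwd_ι (f : F₀) : fwd R₀ b (SymmAlg.ι R₀ f) = eL b f := by
  simp [fwd, SymmAlg.ι, RingQuot.liftAlgHom_mkAlgHom_apply]

/-- The algebra map from the polynomial ring to the symmetric algebra. -/
def bwd : MvPolynomial B R₀ →ₐ[R₀] SymmAlg R₀ F₀ :=
  aeval fun i => SymmAlg.ι R₀ (b i)

@[simp] lemma bwd_eL (f : F₀) : bwd R₀ b (eL b f) = SymmAlg.ι R₀ f := by
  have h : (bwd R₀ b).toLinearMap ∘ₗ eL b = SymmAlg.ι R₀ :=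
    b.ext fun i => by simp [bwd]
  exact congrArg (fun g => g f) h

lemma bwd_fwd (z : SymmAlg R₀ F₀) : bwd R₀ b (fwd R₀ b z) = z := by
  have h : (bwd R₀ b).comp (fwd R₀ b) = AlgHom.id R₀ (SymmAlg R₀ F₀) := by
    apply RingQuot.ringQuot_ext'
    apply TensorAlgebra.hom_ext
    refine LinearMap.ext fun f => ?_
    have h1 : (RingQuot.mkAlgHom R₀ (SymRel R₀ F₀)) (TensorAlgebra.ι R₀ f)
        = SymmAlg.ι R₀ f := rfl
    simp [h1, fwd_ι, bwd_eL]
  exact congrArg (fun g => g z) h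

end SymPolyAux

/-- If `M ≤ F` with `F` free, `H` is a direct summand of `F` with `H ∩ M = 0`, and `d!` is a
nonzerodivisor in `R`, then the ideal of `Sym(F)` generated by `H` meets the degree-`d`
component of the subalgebra generated by `M` trivially. -/
theorem ideal_span_inf_grade_eq_bot {R : Type*} [CommRing R]
    {F : Type*} [AddCommGroup F] [Module R F] [Module.Free R F]
    (M H : Submodule R F) (hH : ∃ H' : Submodule R F, IsCompl H H')
    (hHM : H ⊓ M = ⊥) (d : ℕ) (hd : (d.factorial : R) ∈ nonZeroDivisors R) :
    Submodule.restrictScalars R (Ideal.span (SymmAlg.ι R '' (H : Set F))) ⊓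
        (Submodule.map (SymmAlg.ι R) M) ^ d = ⊥ := by
  classical
  obtain ⟨H', hc⟩ := hH
  set b : Module.Basis (Module.Free.ChooseBasisIndex R F) R F := Module.Free.chooseBasis R F with hb
  set pi : F →ₗ[R] F := H'.subtype ∘ₗ H'.linearProjOfIsCompl H hc.symm with hpi
  rw [eq_bot_iff]
  rintro x ⟨hx1, hx2⟩
  rw [Submodule.mem_bot]
  have hy2 : SymPolyAux.fwd R b x ∈ (Submodule.map (SymPolyAux.eL b) M) ^ d := by
    have h1 : Submodule.map (SymPolyAux.fwd R b).toLinearMap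
          ((Submodule.map (SymmAlg.ι R) M) ^ d)
        = (Submodule.map (SymPolyAux.fwd R b).toLinearMap
          (Submodule.map (SymmAlg.ι R) M)) ^ d :=
      Submodule.map_pow _ _ d
    have h2 : Submodule.map (SymPolyAux.fwd R b).toLinearMap
          (Submodule.map (SymmAlg.ι R) M)
        = Submodule.map (SymPolyAux.eL b) M := by
      rw [← Submodule.map_comp]
      congr 1
      exact LinearMap.ext fun m => SymPolyAux.fwd_ι R b m
    rw [← h2, ← h1]
    exact Submodule.mem_map_of_mem hx2
  have hy1 : SymPolyAux.Ph b pi (SymPolyAux.fwd R b x) = 0 := by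
    have hx1' : x ∈ Ideal.span (SymmAlg.ι R '' (H : Set F)) := hx1
    have hle : Ideal.span (SymmAlg.ι R '' (H : Set F)) ≤
        RingHom.ker ((SymPolyAux.Ph b pi).toRingHom.comp (SymPolyAux.fwd R b).toRingHom) := by
      rw [Ideal.span_le]
      rintro z ⟨f, hf, rfl⟩
      have hpif : pi f = 0 := by
        rw [hpi, LinearMap.comp_apply]; exact (congrArg _ (Submodule.linearProjOfIsCompl_apply_right' hc.symm hf)).trans (map_zero _)
      simp [SetLike.mem_coe, RingHom.mem_ker, SymPolyAux.fwd_ι, SymPolyAux.Ph_eL, hpif]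
    simpa [RingHom.mem_ker] using hle hx1'
  have h0 : SymPolyAux.fwd R b x = 0 :=
    SymPolyAux.poly_main b M H H' hc hHM d hd _ hy2 hy1
  calc x = SymPolyAux.bwd R b (SymPolyAux.fwd R b x) := (SymPolyAux.bwd_fwd R b x).symm
    _ = 0 := by rw [h0, map_zero]
end
end

section
/- Let R be a Noetherian ring and M a finitely generated R-module. There is a one-to-one correspondence between the minimal primes of the Rees algebra R(M) and the minimal primes of R, given by contraction P ↦ P ∩ R. -/
/-!
The Rees algebra `R(M)` sits between `R` and the polynomial ring `R[x] = Sym(F)`. The minimal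
primes of `R[x]` are exactly the extensions `p R[x]` of the minimal primes `p` of `R`, so
contraction is a bijection for `R ⊆ R[x]`. Since `R(M) → R[x]` is injective, every minimal prime
of `R(M)` is the contraction of a minimal prime of `R[x]`; comparing contractions down to `R`
shows that these contractions are again minimal, and the bijection descends to `R ⊆ R(M)`.
-/

noncomputable section

variable (R : Type*) [CommRing R] {M N : Type*} [AddCommGroup M] [Module R M]
  [AddCommGroup N] [Module R N]

universe w
/-- A map to a free module is versal if every map to a free module factors through it. -/
def IsVersal {R : Type*} [CommRing R] {M F : Type*} [AddCommGroup M] [Module R M]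
    [AddCommGroup F] [Module R F] (f : M →ₗ[R] F) : Prop :=
  ∀ (G : Type w) [AddCommGroup G] [Module R G] [Module.Free R G] (g : M →ₗ[R] G),
    ∃ h : F →ₗ[R] G, h ∘ₗ f = g

theorem Set.BijOn.of_comp_of_surjOn {α β γ : Type*} {f : α → β} {g : β → γ} {s : Set α}
    {t : Set β} {u : Set γ} (h : Set.BijOn (g ∘ f) s u) (hf : Set.SurjOn f s t)
    (hmaps : Set.MapsTo f s t) : Set.BijOn g t u := by
  rw [← hf.image_eq_of_mapsTo hmaps]
  exact ⟨Set.mapsTo_image_iff.2 h.mapsTo, h.injOn.image_of_comp,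
    h.surjOn.of_comp (Set.mapsTo_image f s)⟩

theorem Ideal.bijOn_comap_minimalPrimes_of_injective_of_comp {R S T : Type*} [CommRing R]
    [CommRing S] [CommRing T] (ψ : R →+* S) {φ : S →+* T} (hφ : Function.Injective φ)
    (h : Set.BijOn (Ideal.comap (φ.comp ψ)) (minimalPrimes T) (minimalPrimes R)) :
    Set.BijOn (Ideal.comap ψ) (minimalPrimes S) (minimalPrimes R) := by
  have hcomap : Ideal.comap (φ.comp ψ) = Ideal.comap ψ ∘ Ideal.comap φ :=
    funext fun q => (Ideal.comap_comap ψ φ).symm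
  have hsurj : Set.SurjOn (Ideal.comap φ) (minimalPrimes T) (minimalPrimes S) := fun Q hQ =>
    Ideal.exists_minimalPrimes_comap_eq φ Q (by rwa [Ideal.comap_bot_of_injective φ hφ])
  refine (hcomap ▸ h).of_comp_of_surjOn hsurj fun q hq => ?_
  have := hq.1.1
  obtain ⟨Q, hQ, hQq⟩ := Ideal.exists_minimalPrimes_le (J := q.comap φ) bot_le
  obtain ⟨q', hq', rfl⟩ := hsurj hQ
  have hle : q'.comap (φ.comp ψ) ≤ q.comap (φ.comp ψ) := by
    simpa only [← Ideal.comap_comap] using Ideal.comap_mono hQq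
  have heq : q' = q :=
    h.injOn hq' hq (le_antisymm hle ((h.mapsTo hq).2 (h.mapsTo hq').1 hle))
  rwa [heq] at hQ

namespace MvPolynomial

variable {R σ : Type*} [CommRing R]

theorem comap_C_map_C (p : Ideal R) : (p.map (C : R →+* MvPolynomial σ R)).comap C = p := by
  ext r
  rw [Ideal.mem_comap, mem_map_C_iff]
  exact ⟨fun h => by simpa using h 0, fun h m => by
    classical
    rw [coeff_C]; split_ifs <;> simp [h]⟩

instance isPrime_map_C (p : Ideal R) [p.IsPrime] :
    (p.map (C : R →+* MvPolynomial σ R)).IsPrime := by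
  simpa only [ker_map, Ideal.mk_ker] using
    RingHom.ker_isPrime (map (σ := σ) (Ideal.Quotient.mk p))

theorem map_C_comap_C_of_mem_minimalPrimes {q : Ideal (MvPolynomial σ R)}
    (hq : q ∈ minimalPrimes (MvPolynomial σ R)) : (q.comap C).map C = q := by
  have := hq.1.1
  have hle : (q.comap C).map C ≤ q := Ideal.map_comap_le
  exact le_antisymm hle (hq.2 ⟨isPrime_map_C _, bot_le⟩ hle)

theorem comap_C_mem_minimalPrimes {q : Ideal (MvPolynomial σ R)}
    (hq : q ∈ minimalPrimes (MvPolynomial σ R)) : q.comap C ∈ minimalPrimes R := by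
  have := hq.1.1
  refine ⟨⟨Ideal.comap_isPrime C q, bot_le⟩, fun p ⟨hp, _⟩ hpq => ?_⟩
  have hmap : p.map C ≤ q := Ideal.map_le_iff_le_comap.2 hpq
  calc q.comap C ≤ (p.map C).comap C := Ideal.comap_mono (hq.2 ⟨isPrime_map_C p, bot_le⟩ hmap)
    _ = p := comap_C_map_C p

theorem bijOn_comap_C_minimalPrimes :
    Set.BijOn (Ideal.comap (C : R →+* MvPolynomial σ R)) (minimalPrimes (MvPolynomial σ R))
      (minimalPrimes R) := by
  refine ⟨fun q hq => comap_C_mem_minimalPrimes hq, fun q₁ hq₁ q₂ hq₂ h => ?_, fun p hp => ?_⟩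
  · rw [← map_C_comap_C_of_mem_minimalPrimes hq₁, ← map_C_comap_C_of_mem_minimalPrimes hq₂]
    exact congrArg _ h
  · have := hp.1.1
    obtain ⟨q, hq, hqp⟩ := Ideal.exists_minimalPrimes_le (J := p.map (C (σ := σ))) bot_le
    have hle : q.comap C ≤ p := (Ideal.comap_mono hqp).trans (comap_C_map_C p).le
    exact ⟨q, hq, le_antisymm hle (hp.2 (comap_C_mem_minimalPrimes hq).1 hle)⟩

theorem bijOn_comap_algebraMap_minimalPrimes_of_injective {A : Type*} [CommRing A]
    [Algebra R A] (Φ : A →ₐ[R] MvPolynomial σ R) (hΦ : Function.Injective Φ) :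
    Set.BijOn (Ideal.comap (algebraMap R A)) (minimalPrimes A) (minimalPrimes R) := by
  refine Ideal.bijOn_comap_minimalPrimes_of_injective_of_comp _
    (φ := (Φ : A →+* MvPolynomial σ R)) hΦ ?_
  rw [Φ.comp_algebraMap, algebraMap_eq]
  exact bijOn_comap_C_minimalPrimes

end MvPolynomial

namespace SymmAlg

variable {σ A : Type*} [CommRing A] [Algebra R A]

def lift (g : M →ₗ[R] A) : SymmAlg R M →ₐ[R] A :=
  RingQuot.liftAlgHom R ⟨TensorAlgebra.lift R g, by rintro _ _ ⟨x, y⟩; simp [mul_comm]⟩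

@[simp]
theorem lift_ι (g : M →ₗ[R] A) (m : M) : lift R g (ι R m) = g m := by
  simp [lift, ι, RingQuot.liftAlgHom_mkAlgHom_apply]

theorem algHom_ext {g₁ g₂ : SymmAlg R M →ₐ[R] A} (h : ∀ m, g₁ (ι R m) = g₂ (ι R m)) :
    g₁ = g₂ :=
  RingQuot.ringQuot_ext' R g₁ g₂ (TensorAlgebra.hom_ext (LinearMap.ext h))

def equivMvPolynomial (b : Module.Basis σ R M) : SymmAlg R M ≃ₐ[R] MvPolynomial σ R :=
  AlgEquiv.ofAlgHom (lift R (b.constr R MvPolynomial.X))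
    (MvPolynomial.aeval fun i => ι R (b i))
    (MvPolynomial.algHom_ext fun i => by simp)
    (algHom_ext R fun m => by
      have : (MvPolynomial.aeval fun i => ι R (b i)).toLinearMap ∘ₗ b.constr R MvPolynomial.X =
          ι R := b.ext fun i => by simp
      simpa using LinearMap.congr_fun this m)

end SymmAlg

theorem bijOn_minimalPrimes_reesAlgebra_general {R : Type*} [CommRing R]
    {M : Type*} [AddCommGroup M] [Module R M]
    (n : ℕ) (f : M →ₗ[R] (Fin n → R)) :
    Set.BijOn (fun P : Ideal ↥(SymmAlg.map R f).range =>
        P.comap (algebraMap R ↥(SymmAlg.map R f).range))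
      (minimalPrimes ↥(SymmAlg.map R f).range) (minimalPrimes R) :=
  MvPolynomial.bijOn_comap_algebraMap_minimalPrimes_of_injective
    ((SymmAlg.equivMvPolynomial R (Pi.basisFun R (Fin n))).toAlgHom.comp
      (SymmAlg.map R f).range.val)
    ((SymmAlg.equivMvPolynomial R _).injective.comp Subtype.val_injective)

/-- Contraction gives a bijection between the minimal primes of the Rees algebra `R(M)`
(the image of `Sym(f)` for a versal map `f` to a finite free module) and those of `R`. -/
theorem bijOn_minimalPrimes_reesAlgebra {R : Type*} [CommRing R] [IsNoetherianRing R]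
    {M : Type*} [AddCommGroup M] [Module R M] [Module.Finite R M]
    (n : ℕ) (f : M →ₗ[R] (Fin n → R)) (hf : IsVersal f) :
    Set.BijOn (fun P : Ideal ↥(SymmAlg.map R f).range =>
        P.comap (algebraMap R ↥(SymmAlg.map R f).range))
      (minimalPrimes ↥(SymmAlg.map R f).range) (minimalPrimes R) :=
  bijOn_minimalPrimes_reesAlgebra_general n f
end
end

section
/- Let R be a commutative ring, I ⊆ R an ideal, and view I as an abstract R-module. If I is also isomorphic as an R-module to another ideal J ⊆ R, then the classical Rees algebras ⊕ₙ Iⁿ and ⊕ₙ Jⁿ are isomorphic as graded R-algebras, provided I is finitely generated. -/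
open Polynomial

namespace ReesIsoAux

variable {R : Type*} [CommRing R]

/-- The canonical map from the free module on `List ↥I` to `R[X]`, applying `g` to each entry:
`[a₁, …, aₙ] ↦ (g a₁ ⋯ g aₙ) Xⁿ`. -/
noncomputable def genMap (I : Ideal R) (g : ↥I → R) : (List ↥I →₀ R) →ₗ[R] R[X] :=
  Finsupp.linearCombination R fun l => monomial l.length (l.map g).prod

lemma genMap_single (I : Ideal R) (g : ↥I → R) (l : List ↥I) (r : R) :
    genMap I g (Finsupp.single l r) = r • monomial l.length (l.map g).prod := by
  simp [genMap, Finsupp.linearCombination_single]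

/-- The embedding of the free module on lists, `[a₁,…,aₙ] ↦ a₁⋯aₙ Xⁿ`. -/
noncomputable def piMap (I : Ideal R) : (List ↥I →₀ R) →ₗ[R] R[X] :=
  genMap I (fun a : ↥I => (a : R))

lemma piMap_single (I : Ideal R) (l : List ↥I) (r : R) :
    piMap I (Finsupp.single l r) = r • monomial l.length (l.map fun a : ↥I => (a : R)).prod :=
  genMap_single _ _ _ _

/-- Core lemma: if a combination of products of `n` elements of `I` vanishes in `R`,
then so does the corresponding combination with a linear functional `f : I →ₗ[R] R`
applied to every factor. -/
lemma core {I : Ideal R} (f : ↥I →ₗ[R] R) :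
    ∀ (n : ℕ) {ι : Type*} (s : Finset ι) (c : ι → R) (a : ι → List ↥I),
      (∀ i ∈ s, (a i).length = n) →
      (∑ i ∈ s, c i * ((a i).map fun x : ↥I => (x : R)).prod) = 0 →
      (∑ i ∈ s, c i * ((a i).map fun x : ↥I => f x).prod) = 0 := by
  intro n
  induction n with
  | zero =>
    intro ι s c a hlen h
    have h0 : ∀ i ∈ s, a i = [] := fun i hi => List.length_eq_zero_iff.mp (hlen i hi)
    calc (∑ i ∈ s, c i * ((a i).map fun x : ↥I => f x).prod)
        = ∑ i ∈ s, c i * ((a i).map fun x : ↥I => (x : R)).prod := by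
          refine Finset.sum_congr rfl fun i hi => ?_
          rw [h0 i hi]; simp
      _ = 0 := h
  | succ n ih =>
    intro ι s c a hlen h
    haveI : Inhabited ↥I := ⟨0⟩
    have hne : ∀ i ∈ s, a i = (a i).headI :: (a i).tail := by
      intro i hi
      cases hcase : a i with
      | nil => exfalso; have := hlen i hi; rw [hcase] at this; simp at this
      | cons y t => simp [hcase]
    have htl : ∀ i ∈ s, (a i).tail.length = n := by
      intro i hi
      have := hlen i hi
      rw [hne i hi] at this
      simpa using this
    set S : ↥I := ∑ i ∈ s, (c i * ((a i).tail.map fun x : ↥I => (x : R)).prod) • (a i).headI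
      with hSdef
    have hScoe : (S : R) = 0 := by
      rw [hSdef]
      push_cast
      rw [← h]
      refine Finset.sum_congr rfl fun i hi => ?_
      conv_rhs => rw [hne i hi]
      simp [mul_comm, mul_assoc, mul_left_comm]
    have hS0 : S = 0 := Subtype.ext (by simpa using hScoe)
    have hfS : (∑ i ∈ s, (c i * f ((a i).headI)) *
        ((a i).tail.map fun x : ↥I => (x : R)).prod) = 0 := by
      have := congrArg f hS0
      rw [hSdef] at this
      simp only [map_sum, map_smul, map_zero, smul_eq_mul] at this
      rw [← this]
      refine Finset.sum_congr rfl fun i hi => ?_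
      ring
    have := ih s (fun i => c i * f ((a i).headI)) (fun i => (a i).tail) htl hfS
    rw [← this]
    refine Finset.sum_congr rfl fun i hi => ?_
    conv_lhs => rw [hne i hi]
    simp [mul_assoc]

lemma coeff_genMap (I : Ideal R) (g : ↥I → R) (v : List ↥I →₀ R) (n : ℕ) :
    coeff (genMap I g v) n = ∑ l ∈ v.support.filter (fun l => l.length = n), v l * (l.map g).prod := by
  rw [genMap, Finsupp.linearCombination_apply, Finsupp.sum, Polynomial.finset_sum_coeff,
    Finset.sum_filter]
  refine Finset.sum_congr rfl fun l _ => ?_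
  rw [Polynomial.coeff_smul, Polynomial.coeff_monomial, smul_eq_mul, mul_ite, mul_zero]

/-- Well-definedness: relations among products of elements of `I` are preserved by `f`. -/
lemma genMap_eq_zero {I : Ideal R} (f : ↥I →ₗ[R] R) (v : List ↥I →₀ R) (hv : piMap I v = 0) :
    genMap I (fun x => f x) v = 0 := by
  ext n
  rw [coeff_genMap, Polynomial.coeff_zero]
  have h0 : (∑ l ∈ v.support.filter (fun l => l.length = n),
      v l * (l.map fun x : ↥I => (x : R)).prod) = 0 := by
    rw [← coeff_genMap I _ v n, ← piMap, hv, Polynomial.coeff_zero]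
  exact core f n _ (fun l => v l) (fun l => l) (fun l hl => (Finset.mem_filter.mp hl).2) h0

lemma prod_mem_pow (I : Ideal R) :
    ∀ l : List ↥I, (l.map fun a : ↥I => (a : R)).prod ∈ I ^ l.length
  | [] => by simp
  | x :: t => by
      rw [List.map_cons, List.prod_cons, List.length_cons, pow_succ']
      exact Ideal.mul_mem_mul x.2 (prod_mem_pow I t)

lemma piMap_mapDomain_append (I : Ideal R) (b : ↥I) (v : List ↥I →₀ R) :
    piMap I (Finsupp.mapDomain (fun l => l ++ [b]) v) = piMap I v * monomial 1 (b : R) := by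
  have h : (piMap I).comp (Finsupp.lmapDomain R R (fun l : List ↥I => l ++ [b]))
      = (LinearMap.mulRight R (monomial 1 (b : R))).comp (piMap I) := by
    apply Finsupp.lhom_ext
    intro l r
    simp only [LinearMap.comp_apply, Finsupp.lmapDomain_apply, Finsupp.mapDomain_single,
      piMap_single, LinearMap.mulRight_apply]
    rw [List.length_append, List.map_append, List.prod_append]
    simp [Polynomial.monomial_mul_monomial, Polynomial.smul_monomial, smul_mul_assoc, mul_assoc]
  have h2 := LinearMap.congr_fun h v
  simpa using h2

lemma exists_rep_monomial (I : Ideal R) (n : ℕ) (c : R) (hc : c ∈ I ^ n) :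
    ∃ v : List ↥I →₀ R, (∀ l ∈ v.support, l.length = n) ∧ piMap I v = monomial n c := by
  classical
  induction n generalizing c with
  | zero =>
    refine ⟨Finsupp.single [] c, ?_, ?_⟩
    · intro l hl
      have := Finsupp.support_single_subset hl
      simp only [Finset.mem_singleton] at this
      simp [this]
    · rw [piMap_single]
      simp only [List.length_nil, List.map_nil, List.prod_nil]
      rw [Polynomial.smul_monomial, smul_eq_mul, mul_one]
  | succ n ih =>
    rw [pow_succ] at hc
    refine Submodule.mul_induction_on hc ?_ ?_
    · intro x hx y hy
      obtain ⟨v, hvlen, hv⟩ := ih x hx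
      refine ⟨Finsupp.mapDomain (fun l => l ++ [⟨y, hy⟩]) v, ?_, ?_⟩
      · intro l hl
        obtain ⟨l', hl', rfl⟩ := Finset.mem_image.mp (Finsupp.mapDomain_support hl)
        simp [hvlen l' hl']
      · rw [piMap_mapDomain_append, hv]
        simp [Polynomial.monomial_mul_monomial]
    · rintro x y ⟨v, hvlen, hv⟩ ⟨w, hwlen, hw⟩
      refine ⟨v + w, ?_, ?_⟩
      · intro l hl
        rcases Finset.mem_union.mp (Finsupp.support_add hl) with h | h
        · exact hvlen l h
        · exact hwlen l h
      · rw [map_add, hv, hw, ← (Polynomial.monomial (n + 1)).map_add]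

lemma range_piMap (I : Ideal R) :
    LinearMap.range (piMap I) = Subalgebra.toSubmodule (reesAlgebra I) := by
  apply le_antisymm
  · rintro _ ⟨v, rfl⟩
    rw [piMap, genMap, Finsupp.linearCombination_apply, Finsupp.sum]
    refine Submodule.sum_mem _ fun l _ => Submodule.smul_mem _ _ ?_
    exact reesAlgebra.monomial_mem.mpr (prod_mem_pow I l)
  · intro p hp
    rw [Subalgebra.mem_toSubmodule, mem_reesAlgebra_iff] at hp
    rw [p.as_sum_support]
    refine Submodule.sum_mem _ fun i _ => ?_
    obtain ⟨v, -, hv⟩ := exists_rep_monomial I i (p.coeff i) (hp i)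
    exact ⟨v, hv⟩

/-- Formal multiplication on the free module on lists: concatenation. -/
noncomputable def mulV (I : Ideal R) :
    (List ↥I →₀ R) →ₗ[R] (List ↥I →₀ R) →ₗ[R] (List ↥I →₀ R) :=
  Finsupp.linearCombination R fun l =>
    (Finsupp.linearCombination R fun l' => Finsupp.single (l ++ l') (1 : R))

lemma mulV_single (I : Ideal R) (l l' : List ↥I) (r r' : R) :
    mulV I (Finsupp.single l r) (Finsupp.single l' r')
      = (r * r') • Finsupp.single (l ++ l') (1 : R) := by
  simp [mulV, Finsupp.linearCombination_single, mul_smul]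

lemma genMap_mulV (I : Ideal R) (g : ↥I → R) (v w : List ↥I →₀ R) :
    genMap I g (mulV I v w) = genMap I g v * genMap I g w := by
  have h : (mulV I).compr₂ (genMap I g)
      = (LinearMap.mul R R[X]).compl₁₂ (genMap I g) (genMap I g) := by
    apply Finsupp.lhom_ext
    intro l r
    apply Finsupp.lhom_ext
    intro l' r'
    simp only [LinearMap.compr₂_apply, LinearMap.compl₁₂_apply, LinearMap.mul_apply',
      mulV_single, map_smul, genMap_single, LinearMap.smul_apply]
    rw [List.length_append, List.map_append, List.prod_append]
    simp only [Polynomial.smul_monomial, Polynomial.monomial_mul_monomial, smul_eq_mul, one_mul]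
    congr 1
    ring
  exact LinearMap.congr_fun (LinearMap.congr_fun h v) w

end ReesIsoAux

namespace ReesIsoAux2
open ReesIsoAux
variable {R : Type*} [CommRing R]

section
variable (I J : Ideal R) (e : ↥I ≃ₗ[R] ↥J)

/-- `genMap` with the isomorphism applied entrywise: `[a₁,…,aₙ] ↦ (e a₁ ⋯ e aₙ) Xⁿ`. -/
noncomputable def tauE : (List ↥I →₀ R) →ₗ[R] R[X] :=
  genMap I fun a => (J.subtype.comp e.toLinearMap) a

lemma tauE_eq : tauE I J e = (piMap J).comp (Finsupp.lmapDomain R R (List.map ⇑e)) := by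
  apply Finsupp.lhom_ext
  intro l r
  simp only [tauE, LinearMap.comp_apply, Finsupp.lmapDomain_apply, Finsupp.mapDomain_single,
    genMap_single, piMap_single]
  rw [List.length_map, List.map_map]
  rfl

lemma tauE_congr (v w : List ↥I →₀ R) (h : piMap I v = piMap I w) :
    tauE I J e v = tauE I J e w := by
  have h0 : piMap I (v - w) = 0 := by rw [map_sub, h, sub_self]
  have h2 := genMap_eq_zero (J.subtype.comp e.toLinearMap) (v - w) h0
  have h3 : genMap I (fun x => (J.subtype.comp e.toLinearMap) x) = tauE I J e := rfl
  rw [h3, map_sub, sub_eq_zero] at h2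
  exact h2

lemma piMap_mem (v : List ↥J →₀ R) : piMap J v ∈ reesAlgebra J := by
  have h : piMap J v ∈ LinearMap.range (piMap J) := ⟨v, rfl⟩
  rwa [range_piMap, Subalgebra.mem_toSubmodule] at h

lemma exists_rep (x : ↥(reesAlgebra I)) : ∃ v, piMap I v = (x : R[X]) := by
  have hx := x.2
  rw [← Subalgebra.mem_toSubmodule, ← range_piMap] at hx
  exact hx

/-- The underlying function of the Rees algebra isomorphism. -/
noncomputable def F (x : ↥(reesAlgebra I)) : ↥(reesAlgebra J) :=
  ⟨tauE I J e (exists_rep I x).choose, by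
    rw [tauE_eq, LinearMap.comp_apply]; exact piMap_mem J _⟩

lemma F_coe (x : ↥(reesAlgebra I)) (v : List ↥I →₀ R) (hv : piMap I v = (x : R[X])) :
    (F I J e x : R[X]) = tauE I J e v :=
  tauE_congr I J e _ _ ((exists_rep I x).choose_spec.trans hv.symm)

lemma piMap_one : piMap I (Finsupp.single ([] : List ↥I) (1 : R)) = 1 := by
  rw [piMap_single]; simp

lemma tauE_single (l : List ↥I) (r : R) :
    tauE I J e (Finsupp.single l r)
      = r • monomial l.length (l.map fun a : ↥I => ((e a : ↥J) : R)).prod :=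
  genMap_single _ _ _ _

lemma smul_one_C (r : R) : r • (1 : R[X]) = C r := by
  rw [← Polynomial.C_1, Polynomial.smul_C, smul_eq_mul, mul_one]

lemma coe_algebraMap_rees (K : Ideal R) (r : R) :
    ((algebraMap R ↥(reesAlgebra K) r : ↥(reesAlgebra K)) : R[X]) = C r := by
  rw [Algebra.algebraMap_eq_smul_one, SetLike.val_smul, Subalgebra.coe_one, smul_one_C]

/-- The Rees algebra homomorphism induced by `e`. -/
lemma F_map_one : F I J e 1 = 1 := by
  apply Subtype.ext
  rw [Subalgebra.coe_one,
    F_coe I J e 1 (Finsupp.single [] 1) (by rw [piMap_one, Subalgebra.coe_one]), tauE_single]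
  simp

lemma F_map_mul (x y : ↥(reesAlgebra I)) : F I J e (x * y) = F I J e x * F I J e y := by
  obtain ⟨v, hv⟩ := exists_rep I x
  obtain ⟨w, hw⟩ := exists_rep I y
  have hxy : piMap I (mulV I v w) = ((x * y : ↥(reesAlgebra I)) : R[X]) := by
    rw [show piMap I (mulV I v w) = piMap I v * piMap I w from genMap_mulV I _ v w, hv, hw,
      Subalgebra.coe_mul]
  apply Subtype.ext
  rw [Subalgebra.coe_mul,
    F_coe I J e (x * y) (mulV I v w) hxy, F_coe I J e x v hv, F_coe I J e y w hw]
  exact genMap_mulV I _ v w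

lemma F_map_zero : F I J e 0 = 0 := by
  apply Subtype.ext
  rw [Subalgebra.coe_zero,
    F_coe I J e 0 0 (by rw [map_zero, Subalgebra.coe_zero]), map_zero]

lemma F_map_add (x y : ↥(reesAlgebra I)) : F I J e (x + y) = F I J e x + F I J e y := by
  obtain ⟨v, hv⟩ := exists_rep I x
  obtain ⟨w, hw⟩ := exists_rep I y
  have hxy : piMap I (v + w) = ((x + y : ↥(reesAlgebra I)) : R[X]) := by
    rw [map_add, hv, hw, Subalgebra.coe_add]
  apply Subtype.ext
  rw [Subalgebra.coe_add,
    F_coe I J e (x + y) (v + w) hxy, F_coe I J e x v hv, F_coe I J e y w hw, map_add]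

lemma F_commutes (r : R) :
    F I J e (algebraMap R ↥(reesAlgebra I) r) = algebraMap R ↥(reesAlgebra J) r := by
  apply Subtype.ext
  have h1 : piMap I (Finsupp.single ([] : List ↥I) r)
      = ((algebraMap R ↥(reesAlgebra I) r : ↥(reesAlgebra I)) : R[X]) := by
    rw [piMap_single, coe_algebraMap_rees]
    simp only [List.length_nil, List.map_nil, List.prod_nil]
    exact smul_one_C r
  rw [coe_algebraMap_rees,
    F_coe I J e _ (Finsupp.single [] r) h1, tauE_single]
  simp only [List.length_nil, List.map_nil, List.prod_nil]
  exact smul_one_C r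

/-- The Rees algebra homomorphism induced by `e`. -/
noncomputable def Fhom : ↥(reesAlgebra I) →ₐ[R] ↥(reesAlgebra J) where
  toFun := F I J e
  map_one' := F_map_one I J e
  map_mul' := F_map_mul I J e
  map_zero' := F_map_zero I J e
  map_add' := F_map_add I J e
  commutes' := F_commutes I J e

lemma Fhom_coe_mapDomain (x : ↥(reesAlgebra I)) (v : List ↥I →₀ R)
    (hv : piMap I v = (x : R[X])) :
    (Fhom I J e x : R[X]) = piMap J (Finsupp.mapDomain (List.map ⇑e) v) := by
  show (F I J e x : R[X]) = _
  rw [F_coe I J e x v hv, tauE_eq]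
  rfl

lemma Fhom_inv (x : ↥(reesAlgebra I)) : Fhom J I e.symm (Fhom I J e x) = x := by
  obtain ⟨v, hv⟩ := exists_rep I x
  apply Subtype.ext
  rw [Fhom_coe_mapDomain J I e.symm (Fhom I J e x) (Finsupp.mapDomain (List.map ⇑e) v)
      (Fhom_coe_mapDomain I J e x v hv).symm,
    ← Finsupp.mapDomain_comp]
  have hid : (⇑e.symm ∘ ⇑e) = id := by funext a; simp
  have hcomp : (List.map ⇑e.symm ∘ List.map ⇑e) = id := by
    funext l
    simp only [Function.comp_apply, List.map_map, hid, List.map_id, id_eq]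
  rw [hcomp, Finsupp.mapDomain_id, hv]

lemma piMap_mem_graded (n : ℕ) (w : List ↥J →₀ R) (hw : ∀ l ∈ w.support, l.length = n) :
    piMap J w ∈ Submodule.map (monomial n : R →ₗ[R] R[X]) (J ^ n) := by
  rw [piMap, genMap, Finsupp.linearCombination_apply, Finsupp.sum]
  refine Submodule.sum_mem _ fun l hl => Submodule.smul_mem _ _ ?_
  refine ⟨(l.map fun a : ↥J => (a : R)).prod, ?_, by rw [hw l hl]⟩
  have h := prod_mem_pow J l
  rwa [hw l hl] at h

lemma Fhom_graded (n : ℕ) (x : ↥(reesAlgebra I))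
    (hx : (x : R[X]) ∈ Submodule.map (monomial n : R →ₗ[R] R[X]) (I ^ n)) :
    (Fhom I J e x : R[X]) ∈ Submodule.map (monomial n : R →ₗ[R] R[X]) (J ^ n) := by
  classical
  obtain ⟨c, hc, hcx⟩ := hx
  obtain ⟨v, hlen, hv⟩ := exists_rep_monomial I n c hc
  have hrep : piMap I v = (x : R[X]) := by rw [hv]; exact hcx
  rw [Fhom_coe_mapDomain I J e x v hrep]
  apply piMap_mem_graded
  intro l hl
  obtain ⟨l', hl', rfl⟩ := Finset.mem_image.mp (Finsupp.mapDomain_support hl)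
  simp [hlen l' hl']

end
end ReesIsoAux2

open Polynomial in
/-- If two finitely generated ideals `I` and `J` are isomorphic as `R`-modules, then their
classical Rees algebras `R[It], R[Jt] ⊆ R[t]` are isomorphic as graded `R`-algebras (the
isomorphism matches the degree `n` components `Iⁿ·tⁿ` and `Jⁿ·tⁿ`). -/
theorem reesAlgebra_isomorphic_of_module_isomorphic {R : Type*} [CommRing R]
    (I J : Ideal R) (hI : I.FG) (e : ↥I ≃ₗ[R] ↥J) :
    ∃ φ : ↥(reesAlgebra I) ≃ₐ[R] ↥(reesAlgebra J),
      ∀ (n : ℕ) (x : ↥(reesAlgebra I)),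
        (x : R[X]) ∈ Submodule.map (Polynomial.monomial n) (I ^ n) ↔
          (φ x : R[X]) ∈ Submodule.map (Polynomial.monomial n) (J ^ n) := by
  open ReesIsoAux ReesIsoAux2 in
  refine ⟨AlgEquiv.ofAlgHom (Fhom I J e) (Fhom J I e.symm) ?_ ?_, ?_⟩
  · apply AlgHom.ext
    intro y
    have h := Fhom_inv J I e.symm y
    rw [LinearEquiv.symm_symm] at h
    simpa using h
  · apply AlgHom.ext
    intro x
    simpa using Fhom_inv I J e x
  · intro n x
    constructor
    · intro hx
      exact Fhom_graded I J e n x hx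
    · intro hx
      have h := Fhom_graded J I e.symm n (Fhom I J e x)
        (by exact hx)
      rwa [Fhom_inv I J e x] at h
end

section
/- Let R be a Noetherian local ring of depth zero and M a finitely generated free R-module. Then any injective R-linear map g : M → G to a free R-module splits, and hence is versal. -/
/-!
Depth zero means the residue field `k` embeds into `R` (as `R ∙ a` for a socle element `a`).
Since `M` is flat, `k ⊗ M ↪ R ⊗ M = M`, so the injectivity of `g` forces that of `k ⊗ g`.
Only finitely many basis coordinates of `G` meet `g(M)`; projecting onto them, `g` becomes a map
into a finite free module that is injective mod `𝔪`, hence split. Versality follows by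
composing with the retraction.
-/

open IsLocalRing

theorem LinearMap.lTensor_injective_of_injective_toRing {R N M G : Type*} [CommRing R]
    [AddCommGroup N] [Module R N] [AddCommGroup M] [Module R M] [AddCommGroup G] [Module R G]
    [Module.Flat R M] {φ : N →ₗ[R] R} (hφ : Function.Injective φ)
    {g : M →ₗ[R] G} (hg : Function.Injective g) : Function.Injective (g.lTensor N) := by
  have hcomm : ((TensorProduct.lid R G).toLinearMap ∘ₗ φ.rTensor G) ∘ₗ g.lTensor N =
      g ∘ₗ ((TensorProduct.lid R M).toLinearMap ∘ₗ φ.rTensor M) := by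
    ext; simp
  refine Function.Injective.of_comp
    (f := (TensorProduct.lid R G).toLinearMap ∘ₗ φ.rTensor G) ?_
  rw [← LinearMap.coe_comp, hcomm, LinearMap.coe_comp]
  exact hg.comp ((TensorProduct.lid R M).injective.comp
    (Module.Flat.rTensor_preserves_injective_linearMap φ hφ))

theorem IsLocalRing.exists_injective_residueField_toRing {R : Type*} [CommRing R]
    [IsNoetherianRing R] [IsLocalRing R] (h : maximalIdeal R ∈ associatedPrimes R R) :
    ∃ φ : ResidueField R →ₗ[R] R, Function.Injective φ :=
  ((isAssociatedPrime_iff_exists_injective_linearMap _ _).mp h).2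

theorem Module.Basis.exists_finset_injective_pi_coord_comp {R M G ι : Type*} [CommRing R]
    [AddCommGroup M] [Module R M] [Module.Finite R M] [AddCommGroup G] [Module R G]
    (b : Module.Basis ι R G) {g : M →ₗ[R] G} (hg : Function.Injective g) :
    ∃ s : Finset ι, Function.Injective ((LinearMap.pi fun i : s => b.coord i) ∘ₗ g) := by
  classical
  obtain ⟨T, hT⟩ := (Module.Finite.fg_top (R := R) (M := M)).map g
  set s := T.biUnion fun y => (b.repr y).support
  have hsupp : ∀ x, b.repr (g x) ∈ Finsupp.supported R R (s : Set ι) := by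
    have : Submodule.span R (T : Set G) ≤
        (Finsupp.supported R R (s : Set ι)).comap b.repr.toLinearMap := by
      refine Submodule.span_le.mpr fun y hy => ?_
      rw [SetLike.mem_coe, Submodule.mem_comap, Finsupp.mem_supported]
      exact Finset.coe_subset.mpr (Finset.subset_biUnion_of_mem (fun y => (b.repr y).support) hy)
    exact fun x => this (hT ▸ Submodule.mem_map_of_mem trivial)
  refine ⟨s, (injective_iff_map_eq_zero _).mpr fun x hx => hg ?_⟩
  rw [map_zero, ← b.repr.map_eq_zero_iff]
  ext i
  by_cases hi : i ∈ s
  · exact congrFun hx ⟨i, hi⟩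
  · exact Finsupp.notMem_support_iff.mp fun h => hi ((Finsupp.mem_supported _ _).mp (hsupp x) h)

theorem IsLocalRing.exists_leftInverse_of_injective {R M G : Type*} [CommRing R] [IsLocalRing R]
    [AddCommGroup M] [Module R M] [Module.Finite R M] [Module.Flat R M]
    [AddCommGroup G] [Module R G] [Module.Free R G]
    {φ : ResidueField R →ₗ[R] R} (hφ : Function.Injective φ)
    {g : M →ₗ[R] G} (hg : Function.Injective g) :
    ∃ h : G →ₗ[R] M, h ∘ₗ g = LinearMap.id := by
  let b := Module.Free.chooseBasis R G
  obtain ⟨s, hs⟩ := b.exists_finset_injective_pi_coord_comp hg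
  obtain ⟨h, hh⟩ := (split_injective_iff_lTensor_residueField_injective _).mpr
    (LinearMap.lTensor_injective_of_injective_toRing hφ hs)
  exact ⟨h ∘ₗ LinearMap.pi fun i : s => b.coord i, by rw [LinearMap.comp_assoc, hh]⟩

/-- Over a Noetherian local ring of depth zero (the maximal ideal is an associated prime),
any injective map from a finite free module `M` to a free module splits, and hence is versal. -/
theorem splits_and_versal_of_injective_depth_zero {R : Type*} [CommRing R]
    [IsNoetherianRing R] [IsLocalRing R]
    (hdepth : IsLocalRing.maximalIdeal R ∈ associatedPrimes R R)
    {M : Type*} [AddCommGroup M] [Module R M] [Module.Finite R M] [Module.Free R M]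
    {G : Type*} [AddCommGroup G] [Module R G] [Module.Free R G]
    (g : M →ₗ[R] G) (hg : Function.Injective g) :
    (∃ h : G →ₗ[R] M, h ∘ₗ g = LinearMap.id) ∧
      ∀ (G' : Type*) [AddCommGroup G'] [Module R G'] [Module.Free R G'] (φ : M →ₗ[R] G'),
        ∃ h : G →ₗ[R] G', h ∘ₗ g = φ := by
  obtain ⟨ψ, hψ⟩ := exists_injective_residueField_toRing hdepth
  obtain ⟨h, hh⟩ := exists_leftInverse_of_injective hψ hg
  refine ⟨⟨h, hh⟩, fun G' _ _ _ φ => ⟨φ ∘ₗ h, ?_⟩⟩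
  rw [LinearMap.comp_assoc, hh, LinearMap.comp_id]
end
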